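/- Expected value of the bootstrap covariance estimator under H₀: with Γ = E[h(X₁,X₂)h(X₁,X₃)ᵀ] and Γ₂ = E[h(X₁,X₂)h(X₁,X₂)ᵀ], the estimator Γ̂ₙ = (1/(n(n-1)²)) Σ_{i=1}^n Σ_{j=i+1}^n Σ_{k=i+1}^n h(Xᵢ,Xⱼ)h(Xᵢ,Xₖ)ᵀ satisfies E[Γ̂ₙ] = ((n-2)/(3(n-1))) Γ + (1/(2(n-1))) Γ₂. -/

import Mathlib

/-!
Each summand `h(Xᵢ,Xⱼ)ₐ h(Xᵢ,Xₖ)_b` with `j, k > i` has expectation `Γ` when `j ≠ k` (its law is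
that of three independent copies of `F`) and `Γ₂` when `j = k` (two copies). For fixed `i`, with
`m = n - 1 - i` indices above `i`, the inner double sum therefore has expectation
`m (m - 1) Γ + m Γ₂`, and summing over `i` gives `n(n-1)(n-2)/3 · Γ + n(n-1)/2 · Γ₂`.
-/

open MeasureTheory ProbabilityTheory Finset

lemma Finset.sum_sum_eq_of_offDiag_of_diag {ι R : Type*} [DecidableEq ι] [Ring R]
    (s : Finset ι) (g : ι → ι → R) {c c₂ : R}
    (hoff : ∀ j ∈ s, ∀ k ∈ s, j ≠ k → g j k = c) (hdiag : ∀ j ∈ s, g j j = c₂) :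
    ∑ j ∈ s, ∑ k ∈ s, g j k = #s * (#s - 1) * c + #s * c₂ := by
  have hrow : ∀ j ∈ s, ∑ k ∈ s, g j k = (#s - 1) * c + c₂ := by
    intro j hj
    rw [← add_sum_erase s _ hj, hdiag j hj,
      sum_congr rfl fun k hk => hoff j hj k (mem_of_mem_erase hk) (ne_of_mem_erase hk).symm,
      sum_const, card_erase_of_mem hj, nsmul_eq_mul, Nat.cast_pred (card_pos.mpr ⟨j, hj⟩),
      add_comm]
  rw [sum_congr rfl hrow, sum_const, nsmul_eq_mul, mul_add, mul_assoc]

lemma Fin.sum_card_Ioi_eq_sum_range {M : Type*} [AddCommMonoid M] (n : ℕ) (f : ℕ → M) :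
    ∑ i : Fin n, f #(Ioi i) = ∑ m ∈ range n, f m := by
  simp only [Fin.card_Ioi]
  rw [Fin.sum_univ_eq_sum_range (fun i => f (n - 1 - i)), sum_range_reflect f n]

lemma sum_range_natCast (n : ℕ) : ∑ m ∈ range n, (m : ℝ) = n * (n - 1) / 2 := by
  induction n with
  | zero => simp
  | succ k ih => rw [sum_range_succ, ih]; push_cast; ring

lemma sum_range_natCast_mul_sub_one (n : ℕ) :
    ∑ m ∈ range n, (m : ℝ) * (m - 1) = n * (n - 1) * (n - 2) / 3 := by
  induction n with
  | zero => simp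
  | succ k ih => rw [sum_range_succ, ih]; push_cast; ring

lemma MeasureTheory.MeasurePreserving.integral_comp_of_aestronglyMeasurable
    {α β E : Type*} [MeasurableSpace α] [MeasurableSpace β] [NormedAddCommGroup E]
    [NormedSpace ℝ E] {μ : Measure α} {ν : Measure β} {f : α → β} {g : β → E}
    (hf : MeasurePreserving f μ ν) (hg : AEStronglyMeasurable g ν) :
    ∫ x, g (f x) ∂μ = ∫ y, g y ∂ν := by
  rw [← hf.map_eq] at hg ⊢
  exact (integral_map hf.measurable.aemeasurable hg).symm

section IID

variable {Ω ι β : Type*} [MeasurableSpace Ω] {μ : Measure Ω} [IsFiniteMeasure μ]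
  [MeasurableSpace β] {F : Measure β} {X : ι → Ω → β}

lemma ProbabilityTheory.iIndepFun.measurePreserving_pair (hmeas : ∀ i, Measurable (X i))
    (hindep : iIndepFun X μ) (hdist : ∀ i, μ.map (X i) = F) {i j : ι} (hij : i ≠ j) :
    MeasurePreserving (fun ω => (X i ω, X j ω)) μ (F.prod F) where
  measurable := (hmeas i).prodMk (hmeas j)
  map_eq := by
    rw [(indepFun_iff_map_prod_eq_prod_map_map (hmeas i).aemeasurable
      (hmeas j).aemeasurable).mp (hindep.indepFun hij), hdist i, hdist j]

lemma ProbabilityTheory.iIndepFun.measurePreserving_triple (hmeas : ∀ i, Measurable (X i))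
    (hindep : iIndepFun X μ) (hdist : ∀ i, μ.map (X i) = F) {i j k : ι}
    (hij : i ≠ j) (hik : i ≠ k) (hjk : j ≠ k) :
    MeasurePreserving (fun ω => (X i ω, X j ω, X k ω)) μ (F.prod (F.prod F)) where
  measurable := (hmeas i).prodMk ((hmeas j).prodMk (hmeas k))
  map_eq := by
    have hind : IndepFun (X i) (fun ω => (X j ω, X k ω)) μ :=
      (hindep.indepFun_prodMk hmeas j k i hij.symm hik.symm).symm
    rw [(indepFun_iff_map_prod_eq_prod_map_map (hmeas i).aemeasurable
      ((hmeas j).prodMk (hmeas k)).aemeasurable).mp hind, hdist i,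
      (hindep.measurePreserving_pair hmeas hdist hjk).map_eq]

end IID

lemma integral_sum_sum_of_offDiag_of_diag {Ω ι : Type*} [MeasurableSpace Ω] {μ : Measure Ω}
    [DecidableEq ι] (s : Finset ι) (f : ι → ι → Ω → ℝ) {c c₂ : ℝ}
    (hint : ∀ j ∈ s, ∀ k ∈ s, Integrable (f j k) μ)
    (hoff : ∀ j ∈ s, ∀ k ∈ s, j ≠ k → ∫ ω, f j k ω ∂μ = c)
    (hdiag : ∀ j ∈ s, ∫ ω, f j j ω ∂μ = c₂) :
    ∫ ω, ∑ j ∈ s, ∑ k ∈ s, f j k ω ∂μ = #s * (#s - 1) * c + #s * c₂ := by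
  rw [integral_finsetSum _ fun j hj => integrable_finsetSum _ (hint j hj),
    sum_congr rfl fun j hj => integral_finsetSum _ (hint j hj)]
  exact sum_sum_eq_of_offDiag_of_diag s _ hoff hdiag

theorem expected_bootstrap_covariance_general
    {Ω : Type*} [MeasurableSpace Ω] (μ : Measure Ω) [IsProbabilityMeasure μ]
    {p d n : ℕ} (hn : 3 ≤ n)
    (F : Measure (Fin p → ℝ))
    (X : Fin n → Ω → (Fin p → ℝ))
    (hXmeas : ∀ i, Measurable (X i))
    (hindep : iIndepFun X μ)
    (hXdist : ∀ i, Measure.map (X i) μ = F)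
    (h : (Fin p → ℝ) → (Fin p → ℝ) → (Fin d → ℝ))
    (hint3 : ∀ a b : Fin d,
      Integrable
        (fun z : (Fin p → ℝ) × ((Fin p → ℝ) × (Fin p → ℝ)) =>
          h z.1 z.2.1 a * h z.1 z.2.2 b) (F.prod (F.prod F)))
    (hint2 : ∀ a b : Fin d,
      Integrable
        (fun z : (Fin p → ℝ) × (Fin p → ℝ) => h z.1 z.2 a * h z.1 z.2 b) (F.prod F)) :
    ∀ a b : Fin d,
      ∫ ω, (1 / ((n : ℝ) * ((n : ℝ) - 1) ^ 2)) *
          ∑ i : Fin n, ∑ j ∈ Finset.Ioi i, ∑ k ∈ Finset.Ioi i,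
            h (X i ω) (X j ω) a * h (X i ω) (X k ω) b ∂μ
        = (((n : ℝ) - 2) / (3 * ((n : ℝ) - 1))) *
            (∫ z : (Fin p → ℝ) × ((Fin p → ℝ) × (Fin p → ℝ)),
              h z.1 z.2.1 a * h z.1 z.2.2 b ∂(F.prod (F.prod F)))
          + (1 / (2 * ((n : ℝ) - 1))) *
              (∫ z : (Fin p → ℝ) × (Fin p → ℝ), h z.1 z.2 a * h z.1 z.2 b ∂(F.prod F)) := by
  intro a b
  set Γ := ∫ z : (Fin p → ℝ) × ((Fin p → ℝ) × (Fin p → ℝ)),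
    h z.1 z.2.1 a * h z.1 z.2.2 b ∂(F.prod (F.prod F))
  set Γ₂ := ∫ z : (Fin p → ℝ) × (Fin p → ℝ), h z.1 z.2 a * h z.1 z.2 b ∂(F.prod F)
  have hlaw3 {i j k : Fin n} (hij : i < j) (hik : i < k) (hjk : j ≠ k) :=
    hindep.measurePreserving_triple hXmeas hXdist hij.ne hik.ne hjk
  have hlaw2 {i j : Fin n} (hij : i < j) := hindep.measurePreserving_pair hXmeas hXdist hij.ne
  have hint : ∀ i, ∀ j ∈ Ioi i, ∀ k ∈ Ioi i,
      Integrable (fun ω => h (X i ω) (X j ω) a * h (X i ω) (X k ω) b) μ := by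
    intro i j hj k hk
    rw [mem_Ioi] at hj hk
    rcases eq_or_ne j k with rfl | hjk
    · exact (hlaw2 hj).integrable_comp_of_integrable (hint2 a b)
    · exact (hlaw3 hj hk hjk).integrable_comp_of_integrable (hint3 a b)
  have hinner : ∀ i : Fin n,
      ∫ ω, ∑ j ∈ Ioi i, ∑ k ∈ Ioi i, h (X i ω) (X j ω) a * h (X i ω) (X k ω) b ∂μ
        = #(Ioi i) * (#(Ioi i) - 1) * Γ + #(Ioi i) * Γ₂ := fun i =>
    integral_sum_sum_of_offDiag_of_diag _ _ (hint i)
      (fun j hj k hk hjk => (hlaw3 (mem_Ioi.mp hj) (mem_Ioi.mp hk) hjk)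
        |>.integral_comp_of_aestronglyMeasurable (hint3 a b).aestronglyMeasurable)
      (fun j hj => (hlaw2 (mem_Ioi.mp hj)).integral_comp_of_aestronglyMeasurable
        (hint2 a b).aestronglyMeasurable)
  rw [integral_const_mul, integral_finsetSum _ fun i _ => integrable_finsetSum _ fun j hj =>
      integrable_finsetSum _ (hint i j hj),
    sum_congr rfl fun i _ => hinner i, sum_add_distrib, ← sum_mul, ← sum_mul,
    Fin.sum_card_Ioi_eq_sum_range n (fun m : ℕ => (m : ℝ) * (m - 1)),
    Fin.sum_card_Ioi_eq_sum_range n (fun m : ℕ => (m : ℝ)),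
    sum_range_natCast_mul_sub_one, sum_range_natCast]
  have hn1 : (n : ℝ) - 1 ≠ 0 := by
    have : (3 : ℝ) ≤ n := by exact_mod_cast hn
    linarith
  have hn0 : (n : ℝ) ≠ 0 := by positivity
  field_simp

/-- Expected value of the bootstrap covariance estimator under `H₀`: with
`Γ = E[h(X₁,X₂)h(X₁,X₃)ᵀ]` and `Γ₂ = E[h(X₁,X₂)h(X₁,X₂)ᵀ]`, the estimator
`Γ̂ₙ = (1/(n(n-1)²)) ∑_i ∑_{j>i} ∑_{k>i} h(Xᵢ,Xⱼ)h(Xᵢ,Xₖ)ᵀ` satisfies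
`E[Γ̂ₙ] = ((n-2)/(3(n-1))) Γ + (1/(2(n-1))) Γ₂` entrywise. -/
theorem expected_bootstrap_covariance
    {Ω : Type*} [MeasurableSpace Ω] (μ : Measure Ω) [IsProbabilityMeasure μ]
    {p d n : ℕ} (hn : 3 ≤ n)
    (F : Measure (Fin p → ℝ)) [IsProbabilityMeasure F]
    (X : Fin n → Ω → (Fin p → ℝ))
    (hXmeas : ∀ i, Measurable (X i))
    (hindep : iIndepFun X μ)
    (hXdist : ∀ i, Measure.map (X i) μ = F)
    (h : (Fin p → ℝ) → (Fin p → ℝ) → (Fin d → ℝ))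
    (hmeas : Measurable (fun z : (Fin p → ℝ) × (Fin p → ℝ) => h z.1 z.2))
    (hint3 : ∀ a b : Fin d,
      Integrable
        (fun z : (Fin p → ℝ) × ((Fin p → ℝ) × (Fin p → ℝ)) =>
          h z.1 z.2.1 a * h z.1 z.2.2 b) (F.prod (F.prod F)))
    (hint2 : ∀ a b : Fin d,
      Integrable
        (fun z : (Fin p → ℝ) × (Fin p → ℝ) => h z.1 z.2 a * h z.1 z.2 b) (F.prod F)) :
    ∀ a b : Fin d,
      ∫ ω, (1 / ((n : ℝ) * ((n : ℝ) - 1) ^ 2)) *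
          ∑ i : Fin n, ∑ j ∈ Finset.Ioi i, ∑ k ∈ Finset.Ioi i,
            h (X i ω) (X j ω) a * h (X i ω) (X k ω) b ∂μ
        = (((n : ℝ) - 2) / (3 * ((n : ℝ) - 1))) *
            (∫ z : (Fin p → ℝ) × ((Fin p → ℝ) × (Fin p → ℝ)),
              h z.1 z.2.1 a * h z.1 z.2.2 b ∂(F.prod (F.prod F)))
          + (1 / (2 * ((n : ℝ) - 1))) *
              (∫ z : (Fin p → ℝ) × (Fin p → ℝ), h z.1 z.2 a * h z.1 z.2 b ∂(F.prod F)) :=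
  expected_bootstrap_covariance_general μ hn F X hXmeas hindep hXdist h hint3 hint2
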